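/- Let n ≥ 2, and for i = 1,...,n (indices mod n) let e_i^i, e_{i⊕1}^i ∈ [−1,1] be given. Define δ = ∑ᵢ |e_i^i − e_i^{i⊖1}| and the box R = ∏ᵢ [ |e_i^i + e_{i⊕1}^i| − 1, 1 − |e_i^i − e_{i⊕1}^i| ]. Then every even vertex x of R (a vertex taking the left endpoint in an even number of coordinates) satisfies s₁(x) ≤ n − 2 + δ, where s₁(x) = max over odd sign vectors λ of ∑λᵢ x_{i,i⊕1}. -/

import Mathlib

open Finset

def IsOddSign (n : ℕ) (l : Fin n → ℝ) : Prop :=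
  (∀ i, l i = 1 ∨ l i = -1) ∧ (∏ i, l i) = -1

noncomputable def s1 (n : ℕ) (x : Fin n → ℝ) : ℝ :=
  sSup ((fun l => ∑ i, l i * x i) '' {l | IsOddSign n l})

def Cube (n : ℕ) : Set (Fin n → ℝ) := {x | ∀ i, x i ∈ Set.Icc (-1:ℝ) 1}

def NPoly (n : ℕ) (Δ : ℝ) : Set (Fin n → ℝ) :=
  {x | x ∈ Cube n ∧ ∀ l, IsOddSign n l → (∑ i, l i * x i) ≤ Δ}

/-!
Fix an odd sign vector `λ`. Coordinatewise, `λᵢ xᵢ ≤ 1 - |aᵢ - λᵢ bᵢ|` on the box. Since the vertex is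
even, `λ` cannot be `(-1)^σ`, so at some `j` the sign points away from the chosen endpoint, and there
the bound improves by `2 - 2 max(|aⱼ|, |bⱼ|)`. Following the cycle
`aⱼ → λⱼ bⱼ → λⱼ aⱼ₊₁ → λⱼλⱼ₊₁ bⱼ₊₁ → ⋯` returns to `(∏ λ) aⱼ = -aⱼ`, so
`2 max(|aⱼ|, |bⱼ|) ≤ ∑ |aᵢ - λᵢ bᵢ| + δ`, which absorbs the `∑ |aᵢ - λᵢ bᵢ|` lost coordinatewise.
-/

open Fin.NatCast

@[to_additive]
lemma Fin.prod_range_add_natCast {M : Type*} [CommMonoid M] (n : ℕ) [NeZero n]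
    (f : Fin n → M) (j : Fin n) : ∏ t ∈ range n, f (j + (t : Fin n)) = ∏ i, f i := by
  rw [← Fin.prod_univ_eq_prod_range (fun t => f (j + (t : Fin n)))]
  simp only [Fin.cast_val_eq_self]
  exact Fintype.prod_equiv (Equiv.addLeft j) _ _ fun _ => rfl

lemma abs_sub_prod_mul_le_sum (g ν : ℕ → ℝ) (hν : ∀ t, |ν t| = 1) (m : ℕ) :
    |g 0 - (∏ t ∈ range m, ν t) * g m| ≤ ∑ t ∈ range m, |g t - ν t * g (t + 1)| := by
  induction m with
  | zero => simp
  | succ m ih =>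
    set P := ∏ t ∈ range m, ν t
    have hP : |P| = 1 := by rw [Finset.abs_prod]; simp [hν]
    rw [prod_range_succ, sum_range_succ]
    calc |g 0 - P * ν m * g (m + 1)|
        ≤ |g 0 - P * g m| + |P * (g m - ν m * g (m + 1))| := by
          rw [show P * (g m - ν m * g (m + 1)) = P * g m - P * ν m * g (m + 1) by ring]
          exact abs_sub_le _ _ _
      _ ≤ _ := by rw [abs_mul, hP, one_mul]; exact add_le_add_left ih _

/-- Around a cycle whose signs multiply to `-1`, `f j` is carried to `-f j`. -/
lemma two_mul_abs_le_sum_abs_sub_mul {n : ℕ} [NeZero n] (f μ : Fin n → ℝ)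
    (hμ : ∀ i, |μ i| = 1) (hprod : ∏ i, μ i = -1) (j : Fin n) :
    2 * |f j| ≤ ∑ i, |f i - μ i * f (i + 1)| := by
  have key := abs_sub_prod_mul_le_sum (fun t => f (j + t)) (fun t => μ (j + t))
    (fun _ => hμ _) n
  simp only [Fin.prod_range_add_natCast n μ j, hprod, Fin.natCast_self, add_zero,
    Nat.cast_zero, Nat.cast_succ, ← add_assoc] at key
  rw [Fin.sum_range_add_natCast n (fun i => |f i - μ i * f (i + 1)|) j] at key
  calc 2 * |f j| = |f j - -1 * f j| := by
        rw [show f j - -1 * f j = 2 * f j by ring, abs_mul, abs_two]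
    _ ≤ _ := key

lemma two_mul_max_abs_le {n : ℕ} [NeZero n] (a b l : Fin n → ℝ) (hl : ∀ i, |l i| = 1)
    (hprod : ∏ i, l i = -1) (j : Fin n) :
    2 * max |a j| |b j| ≤ ∑ i, |a i - l i * b i| + ∑ i, |a i - b (i - 1)| := by
  have hshift : ∑ i, |a i - b (i - 1)| = ∑ i, |b i - a (i + 1)| :=
    (Fintype.sum_equiv (Equiv.addRight 1) _ _ fun i => by simp [abs_sub_comm]).symm
  rw [hshift, mul_max_of_nonneg _ _ zero_le_two]
  refine max_le ?_ ?_
  · rw [← sum_add_distrib]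
    refine (two_mul_abs_le_sum_abs_sub_mul a l hl hprod j).trans (sum_le_sum fun i _ => ?_)
    calc |a i - l i * a (i + 1)| ≤ |a i - l i * b i| + |l i * (b i - a (i + 1))| := by
          rw [show l i * (b i - a (i + 1)) = l i * b i - l i * a (i + 1) by ring]
          exact abs_sub_le _ _ _
      _ = _ := by rw [abs_mul, hl, one_mul]
  · have hprod' : ∏ i, l (i + 1) = -1 :=
      (Fintype.prod_equiv (Equiv.addRight 1) _ _ fun _ => rfl).trans hprod
    rw [← Fintype.sum_equiv (Equiv.addRight 1) (fun i => |a (i + 1) - l (i + 1) * b (i + 1)|)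
      (fun i => |a i - l i * b i|) fun _ => rfl, ← sum_add_distrib]
    refine (two_mul_abs_le_sum_abs_sub_mul b _ (fun _ => hl _) hprod' j).trans
      (sum_le_sum fun i _ => ?_)
    exact (abs_sub_le _ (a (i + 1)) _).trans_eq (add_comm _ _)

lemma abs_add_add_abs_sub (A B : ℝ) : |A + B| + |A - B| = 2 * max |A| |B| := by
  rcases le_total |A| |B| with h | h
  · rw [max_eq_right h]
    cases abs_cases A <;> cases abs_cases B <;> cases abs_cases (A + B) <;>
      cases abs_cases (A - B) <;> linarith
  · rw [max_eq_left h]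
    cases abs_cases A <;> cases abs_cases B <;> cases abs_cases (A + B) <;>
      cases abs_cases (A - B) <;> linarith

/-- A coordinate of a vertex of the box `[|A + B| - 1, 1 - |A - B|]`; `c` selects the left
endpoint. -/
def boxVertex (c : Bool) (A B : ℝ) : ℝ := if c then |A + B| - 1 else 1 - |A - B|

section boxVertex

variable {A B L : ℝ}

lemma mul_boxVertex_le (hA : |A| ≤ 1) (hB : |B| ≤ 1) (hL : L = 1 ∨ L = -1) (c : Bool) :
    L * boxVertex c A B ≤ 1 - |A - L * B| := by
  have := abs_add_add_abs_sub A B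
  have := max_le hA hB
  rcases hL with rfl | rfl <;> cases c <;> simp only [boxVertex] <;> norm_num <;> linarith

lemma mul_boxVertex_of_ne (hL : L = 1 ∨ L = -1) {c : Bool} (hc : L ≠ if c then -1 else 1) :
    L * boxVertex c A B = 1 - |A - L * B| - 2 + 2 * max |A| |B| := by
  have := abs_add_add_abs_sub A B
  rcases hL with rfl | rfl <;> cases c <;> norm_num at hc <;> norm_num [boxVertex] <;> linarith

end boxVertex

lemma exists_isOddSign (n : ℕ) [NeZero n] : ∃ l, IsOddSign n l :=
  ⟨Function.update 1 0 (-1), fun i => by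
    rcases eq_or_ne i 0 with rfl | h <;> simp [*], by simp [Finset.prod_update_of_mem]⟩

lemma IsOddSign.exists_ne_of_even {n : ℕ} {l : Fin n → ℝ} (hl : IsOddSign n l) {σ : Fin n → Bool}
    (hσ : Even #{i | σ i}) : ∃ j, l j ≠ if σ j then -1 else 1 := by
  by_contra! h
  have := hl.2
  rw [Finset.prod_congr rfl fun i _ => h i, Finset.prod_ite, prod_const, prod_const, one_pow,
    mul_one, hσ.neg_one_pow] at this
  norm_num at this

lemma sum_mul_boxVertex_le {n : ℕ} [NeZero n] (a b : Fin n → ℝ) (ha : ∀ i, |a i| ≤ 1)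
    (hb : ∀ i, |b i| ≤ 1) {σ : Fin n → Bool} (hσ : Even #{i | σ i}) {l : Fin n → ℝ}
    (hl : IsOddSign n l) :
    ∑ i, l i * boxVertex (σ i) (a i) (b i) ≤ n - 2 + ∑ i, |a i - b (i - 1)| := by
  obtain ⟨j, hj⟩ := hl.exists_ne_of_even hσ
  have habs (i : Fin n) : |l i| = 1 := by rcases hl.1 i with h | h <;> simp [h]
  have hpoint (i : Fin n) : l i * boxVertex (σ i) (a i) (b i) ≤
      1 - |a i - l i * b i| - if j = i then 2 - 2 * max |a j| |b j| else 0 := by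
    split_ifs with h
    · subst h; exact (mul_boxVertex_of_ne (hl.1 j) hj).trans_le (le_of_eq (by ring))
    · simpa using mul_boxVertex_le (ha i) (hb i) (hl.1 i) (σ i)
  calc ∑ i, l i * boxVertex (σ i) (a i) (b i)
      ≤ ∑ i, (1 - |a i - l i * b i| - if j = i then 2 - 2 * max |a j| |b j| else 0) :=
        sum_le_sum fun i _ => hpoint i
    _ = n - ∑ i, |a i - l i * b i| - (2 - 2 * max |a j| |b j|) := by
        simp [sum_sub_distrib]
    _ ≤ _ := by linarith [two_mul_max_abs_le a b l habs hl.2 j]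

theorem stmt14_general (n : ℕ) [NeZero n] (a b : Fin n → ℝ)
    (ha : ∀ i, a i ∈ Set.Icc (-1:ℝ) 1) (hb : ∀ i, b i ∈ Set.Icc (-1:ℝ) 1)
    (σ : Fin n → Bool)
    (hσ : Even (Finset.univ.filter (fun i => σ i = true)).card)
    (x : Fin n → ℝ)
    (hxdef : ∀ i, x i = if σ i then |a i + b i| - 1 else 1 - |a i - b i|) :
    s1 n x ≤ (n:ℝ) - 2 + ∑ i, |a i - b (i - 1)| := by
  obtain rfl : x = fun i => boxVertex (σ i) (a i) (b i) := funext hxdef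
  obtain ⟨l₀, hl₀⟩ := exists_isOddSign n
  refine csSup_le ⟨_, l₀, hl₀, rfl⟩ ?_
  rintro _ ⟨l, hl, rfl⟩
  exact sum_mul_boxVertex_le a b (fun i => abs_le.2 (ha i)) (fun i => abs_le.2 (hb i)) hσ hl

theorem stmt14 (n : ℕ) [NeZero n] (hn : 2 ≤ n) (a b : Fin n → ℝ)
    (ha : ∀ i, a i ∈ Set.Icc (-1:ℝ) 1) (hb : ∀ i, b i ∈ Set.Icc (-1:ℝ) 1)
    (σ : Fin n → Bool)
    (hσ : Even (Finset.univ.filter (fun i => σ i = true)).card)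
    (x : Fin n → ℝ)
    (hxdef : ∀ i, x i = if σ i then |a i + b i| - 1 else 1 - |a i - b i|) :
    s1 n x ≤ (n:ℝ) - 2 + ∑ i, |a i - b (i - 1)| :=
  stmt14_general n a b ha hb σ hσ x hxdef
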